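/- Column j of an m × n sign-restricted matrix contains at most min(2j − 1, m) nonzero entries (for j ≤ ⌈(m+1)/2⌉ the bound 2j−1 holds). -/

import Mathlib

/-!
Let `Q` be the set of rows with a `-1` in column `j`. In such a row the partial row sum before
column `j` is at least `1`, and every partial row sum is nonnegative; since each of the `j` column
sums before column `j` is at most `1`, summing the partial row sums over all rows gives `#Q ≤ j`.
Column `j` itself sums to at most `1`, so it has at most `#Q + 1` entries `1`, hence at most
`2j + 1` nonzero entries.
-/

open Finset

/-- A sign-restricted matrix: entries in {0,1,-1}, every partial column sum
(from row 1 down) equals 0 or 1, every partial row sum (from column 1) is nonnegative. -/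
def IsSRM {m n : ℕ} (A : Matrix (Fin m) (Fin n) ℤ) : Prop :=
  (∀ i j, A i j = 0 ∨ A i j = 1 ∨ A i j = -1) ∧
  (∀ i j, (∑ k ∈ Finset.Iic i, A k j) = 0 ∨ (∑ k ∈ Finset.Iic i, A k j) = 1) ∧
  (∀ i j, 0 ≤ ∑ l ∈ Finset.Iic j, A i l)

namespace Finset

variable {ι M : Type*} [LinearOrder ι] [LocallyFiniteOrderBot ι]
  [AddCommMonoid M] [PartialOrder M]

theorem sum_Iio_nonneg_of_forall_sum_Iic_nonneg [PredOrder ι] {f : ι → M}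
    (hf : ∀ i, 0 ≤ ∑ k ∈ Iic i, f k) (j : ι) : 0 ≤ ∑ k ∈ Iio j, f k := by
  by_cases hj : IsMin j
  · simp [Iio_eq_empty.mpr hj]
  · rw [← Iic_pred_eq_Iio_of_not_isMin hj]
    exact hf _

theorem sum_le_of_forall_sum_Iic_le [Fintype ι] {f : ι → M} {c : M} (hc : 0 ≤ c)
    (hf : ∀ i, ∑ k ∈ Iic i, f k ≤ c) : ∑ i, f i ≤ c := by
  cases isEmpty_or_nonempty ι
  · simpa using hc
  · obtain ⟨t, ht⟩ := Finite.exists_max (id : ι → ι)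
    have hIic : Iic t = univ := eq_univ_of_forall fun i => mem_Iic.mpr (ht i)
    simpa [hIic] using hf t

end Finset

namespace IsSRM

variable {m n : ℕ} {A : Matrix (Fin m) (Fin n) ℤ}

theorem sum_col_le_one (hA : IsSRM A) (j : Fin n) : ∑ i, A i j ≤ 1 :=
  sum_le_of_forall_sum_Iic_le zero_le_one fun i => by
    rcases hA.2.1 i j with h | h <;> omega

theorem sum_Iio_row_nonneg (hA : IsSRM A) (i : Fin m) (j : Fin n) :
    0 ≤ ∑ l ∈ Iio j, A i l :=
  sum_Iio_nonneg_of_forall_sum_Iic_nonneg (hA.2.2 i) j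

theorem one_le_sum_Iio_row_of_eq_neg_one (hA : IsSRM A) {i : Fin m} {j : Fin n}
    (h : A i j = -1) : 1 ≤ ∑ l ∈ Iio j, A i l := by
  have hrow := hA.2.2 i j
  rw [← Iio_insert, sum_insert notMem_Iio_self, h] at hrow
  omega

theorem card_neg_one_le (hA : IsSRM A) (j : Fin n) : #{i | A i j = -1} ≤ j := by
  have key : (#{i | A i j = -1} : ℤ) ≤ j := calc
    (#{i | A i j = -1} : ℤ) = ∑ i ∈ {i | A i j = -1}, 1 := by simp
    _ ≤ ∑ i ∈ {i | A i j = -1}, ∑ l ∈ Iio j, A i l :=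
      sum_le_sum fun i hi => hA.one_le_sum_Iio_row_of_eq_neg_one (mem_filter.mp hi).2
    _ ≤ ∑ i, ∑ l ∈ Iio j, A i l :=
      sum_le_sum_of_subset_of_nonneg (subset_univ _) fun i _ _ => hA.sum_Iio_row_nonneg i j
    _ = ∑ l ∈ Iio j, ∑ i, A i l := sum_comm
    _ ≤ ∑ l ∈ Iio j, 1 := sum_le_sum fun l _ => hA.sum_col_le_one l
    _ = j := by simp
  exact_mod_cast key

theorem card_ne_zero_eq (hA : IsSRM A) (j : Fin n) :
    (#{i | A i j ≠ 0} : ℤ) = ∑ i, A i j + 2 * #{i | A i j = -1} := by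
  simp only [card_filter, Nat.cast_sum, Nat.cast_ite, Nat.cast_one, Nat.cast_zero, mul_sum,
    ← sum_add_distrib]
  refine sum_congr rfl fun i _ => ?_
  rcases hA.1 i j with h | h | h <;> simp [h]

end IsSRM

/-- column j (1-indexed: j.val+1) of an m×n SRM has at most
min(2(j+1)−1, m) nonzero entries. -/
theorem stmt6 (m n : ℕ) (A : Matrix (Fin m) (Fin n) ℤ) (hA : IsSRM A) (j : Fin n) :
    (Finset.univ.filter (fun i : Fin m => A i j ≠ 0)).card ≤
      min (2 * ((j : ℕ) + 1) - 1) m := by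
  refine le_min ?_ ((card_filter_le _ _).trans_eq (card_fin m))
  have hcard := hA.card_ne_zero_eq j
  have hcol := hA.sum_col_le_one j
  have hneg := hA.card_neg_one_le j
  omega
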